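/- Let p and q be distinct propositional variables, φ = ◇◇p ∧ ¬◇p and ψ = ◇◇¬q ∨ q. Although φ → ψ is wK4-valid, there is no formula ι with sig(ι) = ∅ (i.e., built only from ⊤, ⊥ and connectives, containing no propositional variables) such that both φ → ι and ι → ψ are wK4-valid. Hence φ → ψ has no interpolant in wK4. -/

import Mathlib

/-!
Any two points of serial models are related by the total relation, which is a bisimulation for
the empty signature, so a variable-free formula has one truth value across all of them. Now φ is
true at a point of the two-point cluster and ψ is false at `0` in `(ℕ, <)`; both frames are
serial and weakly transitive, so a variable-free interpolant would be true at the first point,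
hence at `0`, and would then force ψ there.
-/

/-- Modal formulas built from propositional variables (indexed by ℕ),
constants ⊤, ⊥, negation, conjunction and the modal operator ◇. -/
inductive MF : Type where
  | var : ℕ → MF
  | top : MF
  | bot : MF
  | neg : MF → MF
  | and : MF → MF → MF
  | dia : MF → MF
deriving DecidableEq

namespace MF

/-- Disjunction, as an abbreviation. -/
def or (a b : MF) : MF := neg (and (neg a) (neg b))

/-- Implication, as an abbreviation. -/
def imp (a b : MF) : MF := MF.or (neg a) b

/-- Box, as an abbreviation: □φ := ¬◇¬φ. -/
def box (a : MF) : MF := neg (dia (neg a))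

/-- The (finite) set of propositional variables occurring in a formula. -/
def sig : MF → Finset ℕ
  | var n => {n}
  | top => ∅
  | bot => ∅
  | neg a => a.sig
  | and a b => a.sig ∪ b.sig
  | dia a => a.sig

/-- The set of subformulas of a formula. -/
def subf : MF → Finset MF
  | var n => {var n}
  | top => {top}
  | bot => {bot}
  | neg a => insert (neg a) (subf a)
  | and a b => insert (and a b) (subf a ∪ subf b)
  | dia a => insert (dia a) (subf a)

/-- The number of subformulas of a formula. -/
def nsub (a : MF) : ℕ := (subf a).card

end MF

/-- A Kripke model: a binary (accessibility) relation on worlds together with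
a valuation assigning to each propositional variable a set of worlds. -/
structure KModel (W : Type) where
  R : W → W → Prop
  val : ℕ → W → Prop

/-- Weak transitivity: xRy and yRz imply x = z or xRz. -/
def WTrans {W : Type} (R : W → W → Prop) : Prop :=
  ∀ x y z : W, R x y → R y z → x = z ∨ R x z

/-- The usual Kripke truth relation. -/
def Sat {W : Type} (M : KModel W) : W → MF → Prop
  | x, .var n => M.val n x
  | _, .top => True
  | _, .bot => False
  | x, .neg a => ¬ Sat M x a
  | x, .and a b => Sat M x a ∧ Sat M x b
  | x, .dia a => ∃ y, M.R x y ∧ Sat M y a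

/-- wK4-validity: truth at every point of every model based on a weakly
transitive frame. -/
def WK4Valid (φ : MF) : Prop :=
  ∀ (W : Type) (M : KModel W), WTrans M.R → ∀ x : W, Sat M x φ

/-- The cluster of a point x: C(x) = {x} ∪ {y | xRy and yRx}. -/
def cluster {W : Type} (R : W → W → Prop) (x : W) : Set W :=
  {x} ∪ {y | R x y ∧ R y x}

/-- C R C' for sets of points: xRy for some x ∈ C, y ∈ C'. -/
def clusterRel {W : Type} (R : W → W → Prop) (C C' : Set W) : Prop :=
  ∃ x ∈ C, ∃ y ∈ C', R x y

/-- C R y for a set C and point y: xRy for some x ∈ C. -/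
def clusterRelPt {W : Type} (R : W → W → Prop) (C : Set W) (y : W) : Prop :=
  ∃ x ∈ C, R x y

/-- C R^s C': C R C' and C ≠ C'. -/
def clusterRelS {W : Type} (R : W → W → Prop) (C C' : Set W) : Prop :=
  clusterRel R C C' ∧ C ≠ C'

/-- A set is a cluster if it is the cluster of some point. -/
def IsCluster {W : Type} (R : W → W → Prop) (C : Set W) : Prop :=
  ∃ x : W, C = cluster R x

/-- A σ-model is descriptive if it satisfies (dif), (ref) and (com). -/
def Descriptive {W : Type} (σ : Finset ℕ) (M : KModel W) : Prop :=
  (∀ x y : W, (∀ φ : MF, φ.sig ⊆ σ → (Sat M x φ ↔ Sat M y φ)) → x = y) ∧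
  (∀ x y : W, M.R x y ↔ ∀ χ : MF, χ.sig ⊆ σ → Sat M y χ → Sat M x (MF.dia χ)) ∧
  (∀ Γ : Set MF, (∀ φ ∈ Γ, φ.sig ⊆ σ) →
    (∀ Γ' : Finset MF, ↑Γ' ⊆ Γ → ∃ x : W, ∀ φ ∈ Γ', Sat M x φ) →
    ∃ x : W, ∀ φ ∈ Γ, Sat M x φ)

/-- The ρ-type of a point: the set of all ρ-formulas true at it. -/
def rType {W : Type} (M : KModel W) (ρ : Finset ℕ) (x : W) : Set MF :=
  {φ : MF | φ.sig ⊆ ρ ∧ Sat M x φ}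

/-- A cluster C is ρ-maximal if whenever C R y and some x ∈ C has the same
ρ-type as y, then y ∈ C. -/
def RhoMaximal {W : Type} (M : KModel W) (ρ : Finset ℕ) (C : Set W) : Prop :=
  ∀ x ∈ C, ∀ y : W, clusterRelPt M.R C y → rType M ρ x = rType M ρ y → y ∈ C

/-- β is a ρ-bisimulation between M1 and M2: conditions (atom) and (move). -/
def IsBisim {W1 W2 : Type} (ρ : Finset ℕ) (M1 : KModel W1) (M2 : KModel W2)
    (β : W1 → W2 → Prop) : Prop :=
  ∀ x1 x2, β x1 x2 →
    (∀ n ∈ ρ, M1.val n x1 ↔ M2.val n x2) ∧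
    (∀ y1, M1.R x1 y1 → ∃ y2, M2.R x2 y2 ∧ β y1 y2) ∧
    (∀ y2, M2.R x2 y2 → ∃ y1, M1.R x1 y1 ∧ β y1 y2)

/-- M1,x1 ∼ρ M2,x2 : some ρ-bisimulation relates x1 to x2. -/
def Bisimilar {W1 W2 : Type} (ρ : Finset ℕ) (M1 : KModel W1) (x1 : W1)
    (M2 : KModel W2) (x2 : W2) : Prop :=
  ∃ β : W1 → W2 → Prop, IsBisim ρ M1 M2 β ∧ β x1 x2

lemma sat_or {W : Type} (M : KModel W) (x : W) (a b : MF) :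
    Sat M x (a.or b) ↔ Sat M x a ∨ Sat M x b := by
  simp only [MF.or, Sat]
  tauto

lemma sat_imp {W : Type} (M : KModel W) (x : W) (a b : MF) :
    Sat M x (a.imp b) ↔ (Sat M x a → Sat M x b) := by
  rw [MF.imp, sat_or, Sat, imp_iff_not_or]

lemma WK4Valid.sat_of_sat {a b : MF} (h : WK4Valid (a.imp b)) {W : Type} {M : KModel W}
    (hM : WTrans M.R) {x : W} (ha : Sat M x a) : Sat M x b :=
  (sat_imp M x a b).1 (h W M hM x) ha

theorem IsBisim.sat_iff {W1 W2 : Type} {ρ : Finset ℕ} {M1 : KModel W1} {M2 : KModel W2}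
    {β : W1 → W2 → Prop} (hβ : IsBisim ρ M1 M2 β) (φ : MF) (hφ : φ.sig ⊆ ρ) :
    ∀ {x1 x2}, β x1 x2 → (Sat M1 x1 φ ↔ Sat M2 x2 φ) := by
  induction φ with
  | var n => exact fun hx => (hβ _ _ hx).1 n (hφ (Finset.mem_singleton_self n))
  | top => exact fun _ => Iff.rfl
  | bot => exact fun _ => Iff.rfl
  | neg a ih => exact fun hx => not_congr (ih hφ hx)
  | and a b iha ihb =>
    rw [MF.sig, Finset.union_subset_iff] at hφ
    exact fun hx => and_congr (iha hφ.1 hx) (ihb hφ.2 hx)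
  | dia a ih =>
    intro x1 x2 hx
    obtain ⟨-, forth, back⟩ := hβ _ _ hx
    constructor
    · rintro ⟨y1, hxy1, hy1⟩
      obtain ⟨y2, hxy2, hy⟩ := forth y1 hxy1
      exact ⟨y2, hxy2, (ih hφ hy).1 hy1⟩
    · rintro ⟨y2, hxy2, hy2⟩
      obtain ⟨y1, hxy1, hy⟩ := back y2 hxy2
      exact ⟨y1, hxy1, (ih hφ hy).2 hy2⟩

lemma isBisim_empty_of_serial {W1 W2 : Type} {M1 : KModel W1} {M2 : KModel W2}
    (h1 : ∀ x, ∃ y, M1.R x y) (h2 : ∀ x, ∃ y, M2.R x y) :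
    IsBisim ∅ M1 M2 fun _ _ => True := by
  intro x1 x2 _
  refine ⟨by simp, fun _ _ => ?_, fun _ _ => ?_⟩
  · obtain ⟨y2, h⟩ := h2 x2
    exact ⟨y2, h, trivial⟩
  · obtain ⟨y1, h⟩ := h1 x1
    exact ⟨y1, h, trivial⟩

theorem sat_iff_of_serial_of_sig_eq_empty {W1 W2 : Type} {M1 : KModel W1} {M2 : KModel W2}
    (h1 : ∀ x, ∃ y, M1.R x y) (h2 : ∀ x, ∃ y, M2.R x y) {ι : MF} (hι : ι.sig = ∅)
    (x1 : W1) (x2 : W2) : Sat M1 x1 ι ↔ Sat M2 x2 ι :=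
  (isBisim_empty_of_serial h1 h2).sat_iff ι hι.subset trivial

def loopAntecedent (p : ℕ) : MF :=
  MF.and (MF.dia (MF.dia (MF.var p))) (MF.neg (MF.dia (MF.var p)))

def loopConsequent (q : ℕ) : MF :=
  MF.or (MF.dia (MF.dia (MF.neg (MF.var q)))) (MF.var q)

/-- In a weakly transitive frame `◇◇p ∧ ¬◇p` forces a path `x R y R x`, along which either `q`
holds at `x` or `¬q` is seen two steps ahead. -/
theorem wK4Valid_imp_loopAntecedent_loopConsequent (p q : ℕ) :
    WK4Valid ((loopAntecedent p).imp (loopConsequent q)) := by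
  intro W M hM x
  rw [sat_imp, loopConsequent, sat_or]
  rintro ⟨⟨y, hxy, z, hyz, hz⟩, hx⟩
  rcases hM x y z hxy hyz with rfl | hxz
  · by_cases hq : M.val q x
    · exact Or.inr hq
    · exact Or.inl ⟨y, hxy, x, hyz, hq⟩
  · exact absurd ⟨z, hxz, hz⟩ hx

def twoCycle : KModel Bool := ⟨(· ≠ ·), fun _ x => x = true⟩

def natLt : KModel ℕ := ⟨(· < ·), fun _ n => n ≠ 0⟩

lemma wTrans_twoCycle : WTrans twoCycle.R := by
  intro x y z hxy hyz
  left
  cases x <;> cases y <;> cases z <;> simp_all [twoCycle]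

lemma wTrans_natLt : WTrans natLt.R :=
  fun _ _ _ hxy hyz => Or.inr (lt_trans hxy hyz)

lemma serial_twoCycle (x : Bool) : ∃ y, twoCycle.R x y := ⟨!x, by cases x <;> simp [twoCycle]⟩

lemma serial_natLt (n : ℕ) : ∃ m, natLt.R n m := ⟨n + 1, n.lt_succ_self⟩

lemma sat_loopAntecedent_twoCycle (p : ℕ) : Sat twoCycle true (loopAntecedent p) := by
  refine ⟨⟨false, Bool.true_eq_false.mp, true, Bool.false_ne_true, rfl⟩, ?_⟩
  rintro ⟨y, hy, hp⟩
  exact hy hp.symm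

lemma not_sat_loopConsequent_natLt (q : ℕ) : ¬ Sat natLt 0 (loopConsequent q) := by
  rw [loopConsequent, sat_or]
  rintro (⟨m, hm, n, hmn, hq⟩ | hq)
  · exact hq (hm.trans hmn).ne'
  · exact hq rfl

theorem stmt4_general (p q : ℕ) :
    let φ := MF.and (MF.dia (MF.dia (MF.var p))) (MF.neg (MF.dia (MF.var p)))
    let ψ := MF.or (MF.dia (MF.dia (MF.neg (MF.var q)))) (MF.var q)
    WK4Valid (MF.imp φ ψ) ∧
    ¬ ∃ ι : MF, ι.sig = ∅ ∧ WK4Valid (MF.imp φ ι) ∧ WK4Valid (MF.imp ι ψ) := by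
  refine ⟨wK4Valid_imp_loopAntecedent_loopConsequent p q, ?_⟩
  rintro ⟨ι, hι, hφι, hιψ⟩
  have hι_cycle : Sat twoCycle true ι :=
    hφι.sat_of_sat wTrans_twoCycle (sat_loopAntecedent_twoCycle p)
  have hι_nat : Sat natLt 0 ι :=
    (sat_iff_of_serial_of_sig_eq_empty serial_twoCycle serial_natLt hι true 0).1 hι_cycle
  exact not_sat_loopConsequent_natLt q (hιψ.sat_of_sat wTrans_natLt hι_nat)

/-- φ = ◇◇p ∧ ¬◇p and ψ = ◇◇¬q ∨ q: the implication φ → ψ is wK4-valid but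
has no variable-free interpolant in wK4. -/
theorem stmt4 (p q : ℕ) (hpq : p ≠ q) :
    let φ := MF.and (MF.dia (MF.dia (MF.var p))) (MF.neg (MF.dia (MF.var p)))
    let ψ := MF.or (MF.dia (MF.dia (MF.neg (MF.var q)))) (MF.var q)
    WK4Valid (MF.imp φ ψ) ∧
    ¬ ∃ ι : MF, ι.sig = ∅ ∧ WK4Valid (MF.imp φ ι) ∧ WK4Valid (MF.imp ι ψ) :=
  stmt4_general p q
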